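/- Let Λ be a semiprimary ring and M a left Λ-module with finite projective dimension n > 0, with minimal projective resolution 0 → P_n → ⋯ → P_0 → M → 0. Then Ext_Λ^n(M, top(P_n)) ≠ 0, where top(P_n) = P_n/J(Λ)P_n. Consequently the injective dimension of the semisimple module top(P_n) is at least n. -/

import Mathlib

universe u

open Function CategoryTheory

/-! ### Ring-theoretic preliminaries -/

/-- The Jacobson radical of a ring (the intersection of all maximal left ideals). -/
def jac (R : Type u) [Ring R] : Ideal R := Ideal.jacobson (⊥ : Ideal R)

section Modules

variable (R : Type u) [Ring R] (M : Type u) [AddCommGroup M] [Module R M]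

/-- A submodule `N` of `M` is superfluous (small) if `N ⊔ L = M` implies `L = M`. -/
def Superfluous (N : Submodule R M) : Prop :=
  ∀ L : Submodule R M, N ⊔ L = ⊤ → L = ⊤

/-- The submodule `I • p` generated by the products of elements of a left ideal `I`
with elements of a submodule `p`. -/
def idealSMul (I : Ideal R) (p : Submodule R M) : Submodule R M :=
  Submodule.span R {x | ∃ a ∈ I, ∃ m ∈ p, x = a • m}

/-- The powers `J(R)^n • M` of the radical acting on a module. -/
def radPow : ℕ → Submodule R M
  | 0 => ⊤
  | n + 1 => idealSMul R M (jac R) (radPow n)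

/-- The Loewy length of a module: the least `n` with `J(R)^n M = 0` (`⊤` if none exists). -/
noncomputable def loewyLength : ℕ∞ :=
  sInf ((↑) '' {n : ℕ | radPow R M n = ⊥})

/-- A projective cover: a linear surjection from a projective module with superfluous kernel. -/
def IsProjectiveCover {P : Type u} [AddCommGroup P] [Module R P]
    (f : P →ₗ[R] M) : Prop :=
  Module.Projective R P ∧ Function.Surjective f ∧ Superfluous R P (LinearMap.ker f)

/-- A module is indecomposable if it is non-zero and admits no non-trivial
direct sum decomposition. -/
def IsIndecomposableModule : Prop :=
  Nontrivial M ∧ ∀ N₁ N₂ : Submodule R M, IsCompl N₁ N₂ → N₁ = ⊥ ∨ N₂ = ⊥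

/-- A submodule is indecomposable if it is non-zero and is not the direct sum of two
non-zero submodules. -/
def IsIndecomposableSubmodule (N : Submodule R M) : Prop :=
  N ≠ ⊥ ∧ ∀ N₁ N₂ : Submodule R M, N₁ ≤ N → N₂ ≤ N → N₁ ⊓ N₂ = ⊥ → N₁ ⊔ N₂ = N →
    N₁ = ⊥ ∨ N₂ = ⊥

end Modules

section Rings

variable (R : Type u) [Ring R]

/-- A ring is semilocal if it is semisimple modulo its Jacobson radical. -/
def IsSemilocalRing : Prop :=
  IsSemisimpleModule R (R ⧸ jac R)

/-- A ring is semiperfect if it is semilocal and idempotents lift modulo the radical. -/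
def IsSemiperfectRing : Prop :=
  IsSemilocalRing R ∧
    ∀ x : R, x * x - x ∈ jac R → ∃ e : R, IsIdempotentElem e ∧ e - x ∈ jac R

/-- A subset `T` of a ring is left T-nilpotent if every sequence in `T` has a
vanishing initial product `a 0 * a 1 * ⋯ * a n`. -/
def IsLeftTNilpotent {R : Type u} [Ring R] (T : Set R) : Prop :=
  ∀ a : ℕ → R, (∀ i, a i ∈ T) → ∃ n : ℕ, ((List.range (n + 1)).map a).prod = 0

/-- A ring is left perfect if it is semilocal with left T-nilpotent radical. -/
def IsLeftPerfectRing : Prop :=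
  IsSemilocalRing R ∧ IsLeftTNilpotent (jac R : Set R)

/-- `I ^ n = 0`: every product of `n` elements of `I` vanishes. -/
def IdealPowZero (I : Ideal R) (n : ℕ) : Prop :=
  ∀ a : ℕ → R, (∀ i, a i ∈ I) → ((List.range n).map a).prod = 0

/-- A ring is semiprimary if it is semilocal and its Jacobson radical is nilpotent. -/
def IsSemiprimaryRing' : Prop :=
  IsSemilocalRing R ∧ ∃ n : ℕ, IdealPowZero R (jac R) n

/-- A primitive idempotent: a non-zero idempotent admitting no non-trivial
decomposition into orthogonal idempotents. -/
def IsPrimitiveIdem (e : R) : Prop :=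
  IsIdempotentElem e ∧ e ≠ 0 ∧
    ∀ f g : R, IsIdempotentElem f → IsIdempotentElem g → f * g = 0 → g * f = 0 →
      f + g = e → f = 0 ∨ g = 0

/-- A complete set of primitive orthogonal idempotents. -/
def IsCompleteOrthogonalPrimitiveSet {ι : Type u} [Fintype ι] (e : ι → R) : Prop :=
  (∀ i, IsPrimitiveIdem R (e i)) ∧ (∀ i j, i ≠ j → e i * e j = 0) ∧ ∑ i, e i = 1

/-- A complete set of primitive orthogonal idempotents is basic if the corresponding
indecomposable projective modules `R e i` are pairwise non-isomorphic. -/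
def IsBasicSet {ι : Type u} [Fintype ι] (e : ι → R) : Prop :=
  IsCompleteOrthogonalPrimitiveSet R e ∧
    ∀ i j, Nonempty ((Ideal.span {e i}) ≃ₗ[R] (Ideal.span {e j})) → i = j

/-- A ring is basic if it admits a complete set of primitive orthogonal idempotents
that is basic. -/
def IsBasicRing : Prop :=
  ∃ (ι : Type u) (_ : Fintype ι) (e : ι → R), IsBasicSet R e

end Rings

/-! ### Homological dimensions -/

section Dim

variable (A : Type u) [Ring A]

/-- `projDimLE A n M`: the `A`-module `M` admits a projective resolution of length `≤ n`. -/
def projDimLE : ℕ → ModuleCat.{u} A → Prop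
  | 0, M => Projective M
  | n + 1, M => ∃ (K P : ModuleCat.{u} A) (f : K ⟶ P) (g : P ⟶ M),
      Projective P ∧ Function.Injective f ∧ Function.Surjective g ∧
      (∀ x, g (f x) = 0) ∧ (∀ y, g y = 0 → ∃ x, f x = y) ∧ projDimLE n K

/-- The projective dimension of a module, as an extended natural number. -/
noncomputable def projDim (M : ModuleCat.{u} A) : ℕ∞ :=
  sInf ((↑) '' {n : ℕ | projDimLE A n M})

/-- `injDimLE A n M`: the `A`-module `M` admits an injective coresolution of length `≤ n`. -/
def injDimLE : ℕ → ModuleCat.{u} A → Prop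
  | 0, M => Injective M
  | n + 1, M => ∃ (I C : ModuleCat.{u} A) (f : M ⟶ I) (g : I ⟶ C),
      Injective I ∧ Function.Injective f ∧ Function.Surjective g ∧
      (∀ x, g (f x) = 0) ∧ (∀ y, g y = 0 → ∃ x, f x = y) ∧ injDimLE n C

/-- The injective dimension of a module, as an extended natural number. -/
noncomputable def injDim (M : ModuleCat.{u} A) : ℕ∞ :=
  sInf ((↑) '' {n : ℕ | injDimLE A n M})

/-- The left global dimension of a ring. -/
noncomputable def glDim : ℕ∞ :=
  ⨆ M : ModuleCat.{u} A, projDim A M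

/-- The little finitistic dimension: the supremum of the projective dimensions of
finitely generated left modules of finite projective dimension. -/
noncomputable def finDim : ℕ∞ :=
  ⨆ (M : ModuleCat.{u} A) (_ : Module.Finite A M ∧ projDim A M ≠ ⊤), projDim A M

/-- The big finitistic dimension: the supremum of the projective dimensions of
all left modules of finite projective dimension. -/
noncomputable def FinDim : ℕ∞ :=
  ⨆ (M : ModuleCat.{u} A) (_ : projDim A M ≠ ⊤), projDim A M

end Dim

/-! ### Induction along a ring homomorphism -/

section Tensor

variable {A B : Type u} [Ring A] [Ring B] (φ : A →+* B)

/-- The relations defining `B ⊗_A M` inside `B ⊗_ℤ M`. -/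
def TensorRel (M : Type u) [AddCommGroup M] [Module A M] :
    Submodule B (TensorProduct ℤ B M) :=
  Submodule.span B
    {x | ∃ (b : B) (a : A) (m : M), x = (b * φ a) ⊗ₜ[ℤ] m - b ⊗ₜ[ℤ] (a • m)}

/-- The induced module `B ⊗_A M` along a ring homomorphism `φ : A →+* B`, realized
as the quotient of `B ⊗_ℤ M` by the bilinearity relations for the `A`-actions. -/
def TensorB (M : Type u) [AddCommGroup M] [Module A M] : Type u :=
  TensorProduct ℤ B M ⧸ TensorRel φ M

noncomputable instance (M : Type u) [AddCommGroup M] [Module A M] :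
    AddCommGroup (TensorB φ M) :=
  inferInstanceAs (AddCommGroup (TensorProduct ℤ B M ⧸ TensorRel φ M))

noncomputable instance (M : Type u) [AddCommGroup M] [Module A M] :
    Module B (TensorB φ M) :=
  inferInstanceAs (Module B (TensorProduct ℤ B M ⧸ TensorRel φ M))

/-- The map induced on `B ⊗_ℤ ·` by an `A`-linear map `f`. -/
noncomputable def tmapAux {M N : Type u} [AddCommGroup M] [Module A M]
    [AddCommGroup N] [Module A N] (f : M →ₗ[A] N) :
    TensorProduct ℤ B M →ₗ[B] TensorProduct ℤ B N :=
  TensorProduct.AlgebraTensorModule.map (LinearMap.id : B →ₗ[B] B)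
    f.toAddMonoidHom.toIntLinearMap

/-- The induction functor on morphisms: `B ⊗_A f : B ⊗_A M →ₗ[B] B ⊗_A N`. -/
noncomputable def tmap {M N : Type u} [AddCommGroup M] [Module A M]
    [AddCommGroup N] [Module A N] (f : M →ₗ[A] N) :
    TensorB φ M →ₗ[B] TensorB φ N :=
  Submodule.mapQ (TensorRel φ M) (TensorRel φ N) (tmapAux (B := B) f) (by
    rw [TensorRel, Submodule.span_le]
    rintro x ⟨b, a, m, rfl⟩
    have : (tmapAux (B := B) f) ((b * φ a) ⊗ₜ[ℤ] m - b ⊗ₜ[ℤ] (a • m)) =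
        (b * φ a) ⊗ₜ[ℤ] (f m) - b ⊗ₜ[ℤ] (a • f m) := by
      simp [tmapAux, map_smul]
    rw [SetLike.mem_coe, Submodule.mem_comap, this]
    exact Submodule.subset_span ⟨b, a, f m, rfl⟩)

/-- `torVanish φ n M` encodes the vanishing `Tor_{n+1}^A(B, M) = 0`, via dimension
shifting through short exact sequences `0 → K → P → M → 0` with `P` projective. -/
def torVanish : ℕ → ModuleCat.{u} A → Prop
  | 0, M => ∀ (K P : ModuleCat.{u} A) (f : K ⟶ P) (g : P ⟶ M),
      Projective P → Function.Injective f → Function.Surjective g →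
      (∀ x, g (f x) = 0) → (∀ y, g y = 0 → ∃ x, f x = y) →
      Function.Injective (tmap φ (f.hom : ↥K →ₗ[A] ↥P))
  | n + 1, M => ∀ (K P : ModuleCat.{u} A) (f : K ⟶ P) (g : P ⟶ M),
      Projective P → Function.Injective f → Function.Surjective g →
      (∀ x, g (f x) = 0) → (∀ y, g y = 0 → ∃ x, f x = y) →
      torVanish n K

/-- The flat dimension of `B` as a right `A`-module along `φ`, characterized by Tor
vanishing: `flatdim B_A ≤ d` iff `Tor_n^A(B, M) = 0` for all `n > d` and all left
`A`-modules `M`. -/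
noncomputable def flatDimR : ℕ∞ :=
  sInf ((↑) '' {d : ℕ | ∀ (M : ModuleCat.{u} A) (n : ℕ), d ≤ n → torVanish φ n M})

/-- `B` as a right `A`-module (i.e. a left `Aᵐᵒᵖ`-module) via `φ`. -/
noncomputable def rightModule : Module Aᵐᵒᵖ B :=
  Module.compHom B (RingHom.op φ)

/-- The projective dimension of `B` as a right `A`-module via `φ`. -/
noncomputable def pdBA : ℕ∞ :=
  letI := rightModule φ
  projDim Aᵐᵒᵖ (ModuleCat.of Aᵐᵒᵖ B)

end Tensor

/-! If `Ext^n(M, top P_n)` vanished, the projection `P_n → top P_n` would factor as `g ∘ d_n`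
through `P_{n-1}`. Minimality makes `im d_n` superfluous in `P_{n-1}`, and `g ∘ d_n` is onto, so
`g = 0`; hence `P_n = J P_n`, which forces `P_n = 0` because `J` is nilpotent. The bound on the
injective dimension is dimension shifting: along an injective coresolution of length `< n`, every
cocycle `P_n → Q` is a coboundary. -/

section Nilpotent

variable {R : Type u} [Ring R] {M : Type u} [AddCommGroup M] [Module R M]

theorem idealSMul_eq_smul (I : Ideal R) (p : Submodule R M) : idealSMul R M I p = I • p := by
  refine le_antisymm (Submodule.span_le.2 ?_) (Submodule.smul_le.2 fun a ha m hm => ?_)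
  · rintro _ ⟨a, ha, m, hm, rfl⟩
    exact Submodule.smul_mem_smul ha hm
  · exact Submodule.subset_span ⟨a, ha, m, hm, rfl⟩

theorem IdealPowZero.list_prod_eq_zero {I : Ideal R} {n : ℕ} (hI : IdealPowZero R I n)
    {l : List R} (hl : ∀ a ∈ l, a ∈ I) (hlen : l.length = n) : l.prod = 0 := by
  have hmap : (List.range n).map (fun i => l.getD i 0) = l := by
    apply List.ext_getElem <;> simp_all
  rw [← hmap]
  refine hI _ fun i => ?_
  rcases lt_or_ge i l.length with h | h
  · rw [List.getD_eq_getElem l 0 h]; exact hl _ (List.getElem_mem h)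
  · rw [List.getD_eq_default l 0 h]; exact I.zero_mem

theorem eq_zero_of_top_le_smul_of_idealPowZero {I : Ideal R} {n : ℕ} (hI : IdealPowZero R I n)
    (hM : (⊤ : Submodule R M) ≤ I • ⊤) (x : M) : x = 0 := by
  have key : ∀ k, ∀ l : List R, (∀ a ∈ l, a ∈ I) → l.length + k = n → ∀ x : M, l.prod • x = 0 := by
    intro k
    induction k with
    | zero =>
      intro l hl hlen x
      rw [hI.list_prod_eq_zero hl hlen, zero_smul]
    | succ k ih =>
      intro l hl hlen x
      refine Submodule.smul_induction_on (p := fun y => l.prod • y = 0)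
        (hM (Submodule.mem_top (x := x))) (fun a ha m _ => ?_) fun y z hy hz => ?_
      · have hla : ∀ b ∈ l ++ [a], b ∈ I := by simpa [or_imp, forall_and] using ⟨hl, ha⟩
        rw [smul_smul, ← List.prod_concat, List.concat_eq_append]
        exact ih _ hla (by rw [List.length_append, List.length_singleton]; omega) m
      · rw [smul_add, hy, hz, add_zero]
  simpa using key n [] (by simp) (by simp) x

end Nilpotent

section LinearMaps

variable {R : Type u} [Ring R] {X Y Z Q : Type u} [AddCommGroup X] [Module R X]
  [AddCommGroup Y] [Module R Y] [AddCommGroup Z] [Module R Z] [AddCommGroup Q] [Module R Q]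

theorem Superfluous.eq_zero_of_surjective_comp {f : X →ₗ[R] Y}
    (hf : Superfluous R Y (LinearMap.range f)) {g : Y →ₗ[R] Z}
    (hgf : Function.Surjective (g ∘ₗ f)) : g = 0 := by
  refine LinearMap.ker_eq_top.1 (hf _ (eq_top_iff.2 fun y _ => ?_))
  obtain ⟨x, hx⟩ := hgf (g y)
  rw [← add_sub_cancel (f x) y]
  refine Submodule.add_mem_sup (LinearMap.mem_range_self f x) ?_
  rw [LinearMap.mem_ker, map_sub, ← LinearMap.comp_apply, hx, sub_self]

theorem mkQ_idealSMul_top_ne_comp {I : Ideal R} {n : ℕ} (hI : IdealPowZero R I n)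
    (hX : ∃ x : X, x ≠ 0) {f : X →ₗ[R] Y} (hf : Superfluous R Y (LinearMap.range f))
    (g : Y →ₗ[R] X ⧸ idealSMul R X I ⊤) : (idealSMul R X I ⊤).mkQ ≠ g ∘ₗ f := by
  intro hg
  have hg0 : g = 0 := hf.eq_zero_of_surjective_comp (hg ▸ Submodule.mkQ_surjective _)
  obtain ⟨x, hx⟩ := hX
  refine hx (eq_zero_of_top_le_smul_of_idealPowZero hI (fun y _ => ?_) x)
  rw [← idealSMul_eq_smul, ← Submodule.Quotient.mk_eq_zero, ← Submodule.mkQ_apply, hg, hg0,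
    LinearMap.zero_comp, LinearMap.zero_apply]

theorem Module.Injective.exists_comp_eq_of_ker_le [Module.Injective R Q] (v : X →ₗ[R] Y)
    (h : X →ₗ[R] Q) (hvh : LinearMap.ker v ≤ LinearMap.ker h) :
    ∃ g : Y →ₗ[R] Q, g ∘ₗ v = h := by
  obtain ⟨g, hg⟩ := Module.Injective.out ((LinearMap.ker v).liftQ v le_rfl)
    (LinearMap.ker_eq_bot.1 ((LinearMap.ker v).ker_liftQ_eq_bot v le_rfl le_rfl))
    ((LinearMap.ker v).liftQ h hvh)
  exact ⟨g, LinearMap.ext fun x => hg (Submodule.Quotient.mk x)⟩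

theorem Function.Exact.exists_comp_eq_of_comp_eq_zero {ι : Q →ₗ[R] Y} {π : Y →ₗ[R] Z}
    (hιπ : Function.Exact ι π) (hι : Function.Injective ι) (θ : X →ₗ[R] Y) (hθ : π ∘ₗ θ = 0) :
    ∃ g : X →ₗ[R] Q, ι ∘ₗ g = θ := by
  have hrange : ∀ x, θ x ∈ LinearMap.range ι := fun x => by
    rw [← hιπ.linearMap_ker_eq, LinearMap.mem_ker, ← LinearMap.comp_apply, hθ, LinearMap.zero_apply]
  refine ⟨(LinearEquiv.ofInjective ι hι).symm.toLinearMap ∘ₗ θ.codRestrict _ hrange, ?_⟩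
  ext x
  exact LinearEquiv.ofInjective_symm_apply (h := hι) ι (θ.codRestrict _ hrange x)

end LinearMaps

section Resolution

variable {R : Type u} [Ring R] {P : ℕ → Type u} [∀ i, AddCommGroup (P i)] [∀ i, Module R (P i)]
  [∀ i, Module.Projective R (P i)] (d : ∀ i, P (i + 1) →ₗ[R] P i)

theorem exists_comp_eq_of_injDimLE (hd : ∀ i, Function.Exact (d (i + 1)) (d i)) :
    ∀ {n : ℕ} {Q : ModuleCat.{u} R}, injDimLE R n Q → ∀ {p : ℕ}, n ≤ p →
      ∀ h : P (p + 1) →ₗ[R] Q, h ∘ₗ d (p + 1) = 0 → ∃ g : P p →ₗ[R] Q, g ∘ₗ d p = h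
  | 0, Q, hQ, p, _, h, hh => by
    have : Module.Injective R Q := (Module.injective_iff_injective_object R Q).2 hQ
    refine Module.Injective.exists_comp_eq_of_ker_le (d p) h ?_
    rwa [(hd p).linearMap_ker_eq, LinearMap.range_le_ker_iff]
  | n + 1, Q, ⟨I, C, ι, π, hI, hι, hπ, hπι, hιπ, hC⟩, p, hp, h, hh => by
    obtain ⟨q, rfl⟩ : ∃ q, p = q + 1 := ⟨p - 1, by omega⟩
    have hexact : Function.Exact ι.hom π.hom := fun y =>
      ⟨hιπ y, by rintro ⟨x, rfl⟩; exact hπι x⟩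
    have : Module.Injective R I := (Module.injective_iff_injective_object R I).2 hI
    obtain ⟨k, hk⟩ := Module.Injective.exists_comp_eq_of_ker_le (d (q + 1)) (ι.hom ∘ₗ h) (by
      rw [(hd (q + 1)).linearMap_ker_eq, LinearMap.range_le_ker_iff, LinearMap.comp_assoc, hh,
        LinearMap.comp_zero])
    obtain ⟨g', hg'⟩ := exists_comp_eq_of_injDimLE hd hC (p := q) (by omega) (π.hom ∘ₗ k) (by
      rw [LinearMap.comp_assoc, hk, ← LinearMap.comp_assoc, hexact.linearMap_comp_eq_zero,
        LinearMap.zero_comp])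
    obtain ⟨g'', hg''⟩ := Module.projective_lifting_property π.hom g' hπ
    obtain ⟨g, hg⟩ := hexact.exists_comp_eq_of_comp_eq_zero hι (k - g'' ∘ₗ d q) (by
      rw [LinearMap.comp_sub, ← LinearMap.comp_assoc, hg'', hg', sub_self])
    have hιg : ι.hom ∘ₗ (g ∘ₗ d (q + 1)) = ι.hom ∘ₗ h := by
      rw [← LinearMap.comp_assoc, hg, LinearMap.sub_comp, LinearMap.comp_assoc,
        (hd q).linearMap_comp_eq_zero, LinearMap.comp_zero, sub_zero, hk]
    exact ⟨g, LinearMap.ext fun x => hι congr($hιg x)⟩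

end Resolution

theorem statement_17_general (L : Type u) [Ring L] (hsp : IsSemiprimaryRing' L)
    (M : ModuleCat.{u} L) (m : ℕ)
    (P : ℕ → ModuleCat.{u} L) (d : ∀ i : ℕ, P (i + 1) ⟶ P i) (e : P 0 ⟶ M)
    (hproj : ∀ i, Projective (P i))
    (hex0 : ∀ y : P 0, e y = 0 ↔ ∃ x : P 1, d 0 x = y)
    (hex : ∀ i, ∀ y : P (i + 1), d i y = 0 ↔ ∃ x : P (i + 2), d (i + 1) x = y)
    (hmin0 : Superfluous L (P 0) (LinearMap.ker e.hom))
    (hmin : ∀ i, Superfluous L (P (i + 1)) (LinearMap.ker (d i).hom))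
    (hlen : ∀ i, m + 1 < i → ∀ x : P i, x = 0)
    (hne : ∃ x : P (m + 1), x ≠ 0) :
    (∃ h : ↥(P (m + 1)) →ₗ[L]
        (↥(P (m + 1)) ⧸ idealSMul L (P (m + 1)) (jac L) ⊤),
      ∀ g : ↥(P m) →ₗ[L] (↥(P (m + 1)) ⧸ idealSMul L (P (m + 1)) (jac L) ⊤),
        h ≠ g ∘ₗ ((d m).hom : ↥(P (m + 1)) →ₗ[L] ↥(P m))) ∧
    ((m + 1 : ℕ) : ℕ∞) ≤ injDim L (ModuleCat.of L
      (↥(P (m + 1)) ⧸ idealSMul L (P (m + 1)) (jac L) ⊤)) := by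
  obtain ⟨-, n, hnil⟩ := hsp
  have : ∀ i, Module.Projective L (P i) := fun i => (IsProjective.iff_projective (P i)).2 (hproj i)
  have hd : ∀ i, Function.Exact (d (i + 1)).hom (d i).hom := hex
  have hsup : Superfluous L (P m) (LinearMap.range (d m).hom) := by
    cases m with
    | zero => rwa [← (show Function.Exact (d 0).hom e.hom from hex0).linearMap_ker_eq]
    | succ k => rw [← (hd k).linearMap_ker_eq]; exact hmin k
  set T := idealSMul L (P (m + 1)) (jac L) ⊤
  have hnot : ∀ g, T.mkQ ≠ g ∘ₗ (d m).hom := mkQ_idealSMul_top_ne_comp hnil hne hsup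
  refine ⟨⟨T.mkQ, hnot⟩, le_sInf ?_⟩
  rintro _ ⟨k, hk, rfl⟩
  by_contra hlt
  rw [Nat.cast_le, not_le] at hlt
  have hcocycle : T.mkQ ∘ₗ (d (m + 1)).hom = 0 :=
    LinearMap.ext fun x => by rw [hlen (m + 2) (by omega) x, map_zero, map_zero]
  obtain ⟨g, hg⟩ := exists_comp_eq_of_injDimLE (P := fun i => P i) (fun i => (d i).hom) hd hk
    (p := m) (by omega) T.mkQ hcocycle
  exact hnot g hg.symm

/-- For a module `M` of finite projective dimension `n = m + 1 > 0`
over a semiprimary ring with minimal projective resolution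
`0 → P (m+1) → ⋯ → P 0 → M → 0`, the `n`-th Ext group `Ext^n(M, top (P n))`
(computed from the resolution as `Hom(P n, top (P n))` modulo maps factoring through
`d m`) is non-zero; consequently `injdim (top (P n)) ≥ n`. -/
theorem statement_17 (L : Type u) [Ring L] (hsp : IsSemiprimaryRing' L)
    (M : ModuleCat.{u} L) (m : ℕ) (hpd : projDim L M = ((m + 1 : ℕ) : ℕ∞))
    (P : ℕ → ModuleCat.{u} L) (d : ∀ i : ℕ, P (i + 1) ⟶ P i) (e : P 0 ⟶ M)
    (hproj : ∀ i, Projective (P i))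
    (hsurj : Function.Surjective e)
    (hex0 : ∀ y : P 0, e y = 0 ↔ ∃ x : P 1, d 0 x = y)
    (hex : ∀ i, ∀ y : P (i + 1), d i y = 0 ↔ ∃ x : P (i + 2), d (i + 1) x = y)
    (hmin0 : Superfluous L (P 0) (LinearMap.ker e.hom))
    (hmin : ∀ i, Superfluous L (P (i + 1)) (LinearMap.ker (d i).hom))
    (hlen : ∀ i, m + 1 < i → ∀ x : P i, x = 0)
    (hne : ∃ x : P (m + 1), x ≠ 0) :
    (∃ h : ↥(P (m + 1)) →ₗ[L]
        (↥(P (m + 1)) ⧸ idealSMul L (P (m + 1)) (jac L) ⊤),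
      ∀ g : ↥(P m) →ₗ[L] (↥(P (m + 1)) ⧸ idealSMul L (P (m + 1)) (jac L) ⊤),
        h ≠ g ∘ₗ ((d m).hom : ↥(P (m + 1)) →ₗ[L] ↥(P m))) ∧
    ((m + 1 : ℕ) : ℕ∞) ≤ injDim L (ModuleCat.of L
      (↥(P (m + 1)) ⧸ idealSMul L (P (m + 1)) (jac L) ⊤)) :=
  statement_17_general L hsp M m P d e hproj hex0 hex hmin0 hmin hlen hne
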